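/- Fix ε, δ ∈ (0,1), w ∈ [-1,1], and d ∈ ℕ. Let u, v ∈ [-1,1]^d be vectors with i.i.d. uniform entries, defining the two-layer network g(x) = vᵀ σ(u·x). If d ≥ 2⌈(16/ε²)·log(2/δ)⌉, then with probability at least 1-δ there exists a binary mask m ∈ {0,1}^d such that |wx - (v ⊙ m)ᵀ σ(u·x)| ≤ ε for all x ∈ ℝ with |x| ≤ 1. -/

import Mathlib

/-!
With probability at least `1 - δ/2` some neuron `i` has `u i ≥ 1 - ε/2` and `v i` within `ε/2`
of `w`: each neuron does so independently with probability at least `ε²/16`, and the sample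
size gives `(1 - ε²/16)^d ≤ exp (-d ε²/16) ≤ δ/2`. Likewise,
with probability at least `1 - δ/2` some neuron `j` has `u j ≤ -(1 - ε/2)` and `v j` within
`ε/2` of `-w`. Keeping just these two neurons, the ReLU switches off neuron `j` for `x ≥ 0` and
neuron `i` for `x ≤ 0`, and on each half-line the surviving neuron computes `x ↦ v u x` with
`|w - v u| ≤ ε`.
-/

open MeasureTheory Real

noncomputable def unif : Measure ℝ := (2 : ENNReal)⁻¹ • (volume.restrict (Set.Icc (-1:ℝ) 1))

instance : IsProbabilityMeasure unif := by
  constructor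
  simp [unif, Real.volume_Icc]
  norm_num
  exact ENNReal.inv_mul_cancel (by norm_num) (by norm_num)

open Set

lemma unif_Icc {a b : ℝ} (ha : -1 ≤ a) (hb : b ≤ 1) :
    unif (Icc a b) = ENNReal.ofReal ((b - a) / 2) := by
  rw [unif, Measure.smul_apply, Measure.restrict_apply measurableSet_Icc,
    inter_eq_left.mpr (Icc_subset_Icc ha hb), Real.volume_Icc, smul_eq_mul,
    ENNReal.ofReal_div_of_pos two_pos, ENNReal.ofReal_ofNat, ENNReal.div_eq_inv_mul]

lemma ofReal_le_unif_Icc_inter_Icc {w r : ℝ} (hw : w ∈ Icc (-1 : ℝ) 1) (hr0 : 0 ≤ r)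
    (hr1 : r ≤ 1) : ENNReal.ofReal (r / 2) ≤ unif (Icc (-1) 1 ∩ Icc (w - r) (w + r)) := by
  obtain ⟨hw0, hw1⟩ := hw
  rcases le_total w 0 with h | h
  · calc ENNReal.ofReal (r / 2) = unif (Icc w (w + r)) := by
          rw [unif_Icc hw0 (by linarith), add_sub_cancel_left]
      _ ≤ _ := measure_mono fun x hx ↦ by
          exact ⟨⟨by linarith [hx.1], by linarith [hx.2]⟩, ⟨by linarith [hx.1], hx.2⟩⟩
  · calc ENNReal.ofReal (r / 2) = unif (Icc (w - r) w) := by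
          rw [unif_Icc (by linarith) hw1, sub_sub_cancel]
      _ ≤ _ := measure_mono fun x hx ↦ by
          exact ⟨⟨by linarith [hx.1], by linarith [hx.2]⟩, ⟨hx.1, by linarith [hx.2]⟩⟩

lemma ofReal_sq_le_unif_prod {ε : ℝ} (hε : 0 ≤ ε) {I J : Set ℝ}
    (hI : ENNReal.ofReal (ε / 4) ≤ unif I) (hJ : ENNReal.ofReal (ε / 4) ≤ unif J) :
    ENNReal.ofReal (ε ^ 2 / 16) ≤ (unif.prod unif) (I ×ˢ J) := by
  rw [Measure.prod_prod, show ε ^ 2 / 16 = ε / 4 * (ε / 4) by ring,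
    ENNReal.ofReal_mul (by positivity)]
  exact mul_le_mul' hI hJ

/-- Weights `(u, v)` for which the neuron `x ↦ v σ(u x)` is `ε`-close to `x ↦ w x`
on `[0, 1]`. -/
def posNeuronBox (ε w : ℝ) : Set (ℝ × ℝ) :=
  Icc (1 - ε / 2) 1 ×ˢ (Icc (-1) 1 ∩ Icc (w - ε / 2) (w + ε / 2))

def negNeuronBox (ε w : ℝ) : Set (ℝ × ℝ) :=
  Icc (-1) (-(1 - ε / 2)) ×ˢ (Icc (-1) 1 ∩ Icc (-w - ε / 2) (-w + ε / 2))

lemma measurableSet_posNeuronBox (ε w : ℝ) : MeasurableSet (posNeuronBox ε w) :=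
  measurableSet_Icc.prod (measurableSet_Icc.inter measurableSet_Icc)

lemma measurableSet_negNeuronBox (ε w : ℝ) : MeasurableSet (negNeuronBox ε w) :=
  measurableSet_Icc.prod (measurableSet_Icc.inter measurableSet_Icc)

lemma ofReal_le_unif_prod_posNeuronBox {ε w : ℝ} (hε0 : 0 ≤ ε) (hε2 : ε ≤ 2)
    (hw : w ∈ Icc (-1 : ℝ) 1) :
    ENNReal.ofReal (ε ^ 2 / 16) ≤ (unif.prod unif) (posNeuronBox ε w) := by
  refine ofReal_sq_le_unif_prod hε0 ?_ ?_
  · rw [unif_Icc (by linarith) le_rfl]; exact ENNReal.ofReal_le_ofReal (by linarith)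
  · convert ofReal_le_unif_Icc_inter_Icc (r := ε / 2) hw (by linarith) (by linarith) using 2
    ring

lemma ofReal_le_unif_prod_negNeuronBox {ε w : ℝ} (hε0 : 0 ≤ ε) (hε2 : ε ≤ 2)
    (hw : w ∈ Icc (-1 : ℝ) 1) :
    ENNReal.ofReal (ε ^ 2 / 16) ≤ (unif.prod unif) (negNeuronBox ε w) := by
  have hw' : -w ∈ Icc (-1 : ℝ) 1 := ⟨by linarith [hw.2], by linarith [hw.1]⟩
  refine ofReal_sq_le_unif_prod hε0 ?_ ?_
  · rw [unif_Icc le_rfl (by linarith)]; exact ENNReal.ofReal_le_ofReal (by linarith)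
  · convert ofReal_le_unif_Icc_inter_Icc (r := ε / 2) hw' (by linarith) (by linarith) using 2
    ring

lemma abs_sub_mul_le_of_mem_posNeuronBox {ε w u v : ℝ} (h : (u, v) ∈ posNeuronBox ε w) :
    |w - v * u| ≤ ε := by
  obtain ⟨⟨hu0, hu1⟩, ⟨hv0, hv1⟩, hvw0, hvw1⟩ := h
  rw [abs_le]
  constructor <;> nlinarith

lemma neg_mem_posNeuronBox {ε w u v : ℝ} (h : (u, v) ∈ negNeuronBox ε w) :
    (-u, -v) ∈ posNeuronBox ε w := by
  obtain ⟨⟨hu0, hu1⟩, ⟨hv0, hv1⟩, hvw0, hvw1⟩ := h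
  exact ⟨⟨by linarith, by linarith⟩, ⟨by linarith, by linarith⟩, by linarith, by linarith⟩

lemma abs_sub_relu_pair_le {ε w u₁ v₁ u₂ v₂ x : ℝ} (hε : ε ≤ 2)
    (h₁ : (u₁, v₁) ∈ posNeuronBox ε w) (h₂ : (u₂, v₂) ∈ negNeuronBox ε w) (hx : |x| ≤ 1) :
    |w * x - (v₁ * max (u₁ * x) 0 + v₂ * max (u₂ * x) 0)| ≤ ε := by
  have hu₁ : 0 ≤ u₁ := by linarith [h₁.1.1]
  have hu₂ : u₂ ≤ 0 := by linarith [h₂.1.2]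
  rcases le_total 0 x with hx0 | hx0
  · rw [max_eq_left (mul_nonneg hu₁ hx0), max_eq_right (mul_nonpos_of_nonpos_of_nonneg hu₂ hx0),
      show w * x - (v₁ * (u₁ * x) + v₂ * 0) = (w - v₁ * u₁) * x by ring, abs_mul]
    exact (mul_le_of_le_one_right (abs_nonneg _) hx).trans
      (abs_sub_mul_le_of_mem_posNeuronBox h₁)
  · rw [max_eq_right (mul_nonpos_of_nonneg_of_nonpos hu₁ hx0),
      max_eq_left (mul_nonneg_of_nonpos_of_nonpos hu₂ hx0),
      show w * x - (v₁ * 0 + v₂ * (u₂ * x)) = (w - -v₂ * -u₂) * x by ring, abs_mul]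
    exact (mul_le_of_le_one_right (abs_nonneg _) hx).trans
      (abs_sub_mul_le_of_mem_posNeuronBox (neg_mem_posNeuronBox h₂))

lemma exists_mask_of_mem_neuronBoxes {ι : Type*} [Fintype ι] [DecidableEq ι] {ε w : ℝ}
    (hε : ε < 2) {u v : ι → ℝ} (hpos : ∃ i, (u i, v i) ∈ posNeuronBox ε w)
    (hneg : ∃ j, (u j, v j) ∈ negNeuronBox ε w) :
    ∃ m : ι → Bool, ∀ x : ℝ, |x| ≤ 1 →
      |w * x - ∑ k, (if m k then v k else 0) * max (u k * x) 0| ≤ ε := by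
  obtain ⟨i, hi⟩ := hpos
  obtain ⟨j, hj⟩ := hneg
  have hij : i ≠ j := by
    rintro rfl
    linarith [hi.1.1, hj.1.2]
  refine ⟨fun k ↦ decide (k ∈ ({i, j} : Finset ι)), fun x hx ↦ ?_⟩
  simp only [decide_eq_true_eq, ite_mul, zero_mul, Finset.sum_ite_mem, Finset.univ_inter,
    Finset.sum_pair hij]
  exact abs_sub_relu_pair_le hε.le hi hj hx

lemma measure_pi_prod_pi_setOf_forall_mem {ι α β : Type*} [Fintype ι] [MeasurableSpace α]
    [MeasurableSpace β] (μ : Measure α) (ν : Measure β) [SigmaFinite μ] [SigmaFinite ν]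
    (S : Set (α × β)) :
    ((Measure.pi fun _ : ι ↦ μ).prod (Measure.pi fun _ : ι ↦ ν))
      {uv | ∀ i, (uv.1 i, uv.2 i) ∈ S} = μ.prod ν S ^ Fintype.card ι := by
  rw [← (measurePreserving_arrowProdEquivProdArrow α β ι (fun _ ↦ μ) (fun _ ↦ ν)
    ).measure_preimage_equiv]
  have hpre : MeasurableEquiv.arrowProdEquivProdArrow α β ι ⁻¹'
      {uv | ∀ i, (uv.1 i, uv.2 i) ∈ S} = univ.pi fun _ ↦ S := by
    ext f
    simp [MeasurableEquiv.arrowProdEquivProdArrow, Equiv.arrowProdEquivProdArrow]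
  rw [hpre, Measure.pi_pi, Finset.prod_const, Finset.card_univ]

lemma measure_pi_prod_pi_setOf_forall_not_mem_le {ι α β : Type*} [Fintype ι]
    [MeasurableSpace α] [MeasurableSpace β] (μ : Measure α) (ν : Measure β)
    [IsProbabilityMeasure μ] [IsProbabilityMeasure ν] {S : Set (α × β)} (hS : MeasurableSet S)
    {p : ℝ} (hp0 : 0 ≤ p) (hp : ENNReal.ofReal p ≤ μ.prod ν S) :
    ((Measure.pi fun _ : ι ↦ μ).prod (Measure.pi fun _ : ι ↦ ν))
      {uv | ∀ i, (uv.1 i, uv.2 i) ∉ S} ≤ ENNReal.ofReal ((1 - p) ^ Fintype.card ι) := by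
  have hp1 : p ≤ 1 := ENNReal.ofReal_le_one.1 (hp.trans prob_le_one)
  have hcompl : μ.prod ν Sᶜ ≤ ENNReal.ofReal (1 - p) := by
    rw [prob_compl_eq_one_sub hS, ENNReal.ofReal_sub 1 hp0, ENNReal.ofReal_one]
    exact tsub_le_tsub_left hp 1
  rw [ENNReal.ofReal_pow (by linarith)]
  exact (measure_pi_prod_pi_setOf_forall_mem μ ν Sᶜ).le.trans
    (pow_le_pow_left₀ zero_le hcompl _)

lemma one_sub_pow_le_of_log_inv_div_le {p η : ℝ} {n : ℕ} (hp0 : 0 < p) (hp1 : p ≤ 1)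
    (hη : 0 < η) (hn : log η⁻¹ / p ≤ n) : (1 - p) ^ n ≤ η := by
  have hlog : log η⁻¹ ≤ n * p := (div_le_iff₀ hp0).1 hn
  calc (1 - p) ^ n ≤ exp (-p) ^ n := pow_le_pow_left₀ (by linarith) (one_sub_le_exp_neg p) n
    _ = exp (-(n * p)) := by rw [← exp_nat_mul]; ring_nf
    _ ≤ exp (-log η⁻¹) := exp_le_exp.2 (by linarith)
    _ = η := by rw [log_inv, neg_neg, exp_log hη]

lemma ofReal_one_sub_le_of_measure_compl_le {α : Type*} [MeasurableSpace α] {μ : Measure α}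
    [IsProbabilityMeasure μ] {T : Set α} {δ : ℝ} (hδ : 0 ≤ δ) (h : μ Tᶜ ≤ ENNReal.ofReal δ) :
    ENNReal.ofReal (1 - δ) ≤ μ T := by
  rw [ENNReal.ofReal_sub 1 hδ, ENNReal.ofReal_one, tsub_le_iff_right]
  calc 1 = μ univ := measure_univ.symm
    _ ≤ μ T + μ Tᶜ := measure_univ_le_add_compl T
    _ ≤ μ T + ENNReal.ofReal δ := add_le_add_right h _

theorem stmt4 (ε δ w : ℝ) (hε : ε ∈ Set.Ioo (0:ℝ) 1) (hδ : δ ∈ Set.Ioo (0:ℝ) 1)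
    (hw : w ∈ Set.Icc (-1:ℝ) 1) (d : ℕ)
    (hd : d ≥ 2 * ⌈16 / ε ^ 2 * Real.log (2 / δ)⌉₊) :
    ENNReal.ofReal (1 - δ) ≤
      ((Measure.pi fun _ : Fin d => unif).prod (Measure.pi fun _ : Fin d => unif))
        {uv | ∃ m : Fin d → Bool, ∀ x : ℝ, |x| ≤ 1 →
          |w * x - ∑ i, (if m i then uv.2 i else 0) * max (uv.1 i * x) 0| ≤ ε} := by
  obtain ⟨hε0, hε1⟩ := hε
  have hδ0 : 0 < δ := hδ.1
  have hsample : log (2 / δ) / (ε ^ 2 / 16) ≤ d := calc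
    _ = 16 / ε ^ 2 * log (2 / δ) := by ring
    _ ≤ ⌈16 / ε ^ 2 * log (2 / δ)⌉₊ := Nat.le_ceil _
    _ ≤ d := by exact_mod_cast (Nat.le_mul_of_pos_left _ two_pos).trans hd
  have hmiss : ENNReal.ofReal ((1 - ε ^ 2 / 16) ^ Fintype.card (Fin d)) ≤
      ENNReal.ofReal (δ / 2) := by
    rw [Fintype.card_fin]
    exact ENNReal.ofReal_le_ofReal <| one_sub_pow_le_of_log_inv_div_le (by positivity)
      (by nlinarith) (by positivity) (by rwa [inv_div])
  have hpos := measure_pi_prod_pi_setOf_forall_not_mem_le (ι := Fin d) unif unif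
    (measurableSet_posNeuronBox ε w) (by positivity)
    (ofReal_le_unif_prod_posNeuronBox hε0.le (by linarith) hw)
  have hneg := measure_pi_prod_pi_setOf_forall_not_mem_le (ι := Fin d) unif unif
    (measurableSet_negNeuronBox ε w) (by positivity)
    (ofReal_le_unif_prod_negNeuronBox hε0.le (by linarith) hw)
  have hbad := (measure_union_le _ _).trans (add_le_add (hpos.trans hmiss) (hneg.trans hmiss))
  refine ofReal_one_sub_le_of_measure_compl_le hδ0.le
    ((measure_mono ?_).trans (hbad.trans_eq ?_))
  · intro uv huv
    by_contra hcov
    simp only [mem_union, mem_ofPred_eq, not_or, not_forall, not_not] at hcov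
    exact huv (exists_mask_of_mem_neuronBoxes (by linarith) hcov.1 hcov.2)
  · rw [← ENNReal.ofReal_add (by positivity) (by positivity), add_halves]
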